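/- The set C admits an integral representation with respect to its extreme points: for every function f₀ ∈ C there exists a probability measure η on C ∩ 𝒥, defined on the σ-algebra generated by the evaluation maps f ↦ f(x), x ∈ (0,∞), such that f₀(x) = ∫_{C∩𝒥} f(x) η(df) for all x ≥ 0. -/

import Mathlib

open MeasureTheory Filter Topology Set

/-- The probability space `(Ω, 𝓕, P)` is atomless. -/
def Atomless {Ω : Type*} [MeasurableSpace Ω] (P : Measure Ω) : Prop :=
  ∀ A : Set Ω, MeasurableSet A → 0 < P A →
    ∃ B : Set Ω, MeasurableSet B ∧ B ⊆ A ∧ 0 < P B ∧ P B < P A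

/-- The distribution function `F_φ` of `φ`. -/
noncomputable def cdf {Ω : Type*} [MeasurableSpace Ω] (P : Measure Ω) (φ : Ω → ℝ)
    (x : ℝ) : ℝ :=
  (P {ω | φ ω ≤ x}).toReal

/-- The measure `μ` on `[0,∞)` defined by `μ(A) = E[φ; φ ∈ A]`. -/
noncomputable def muD {Ω : Type*} [MeasurableSpace Ω] (P : Measure Ω) (φ : Ω → ℝ) :
    Measure ℝ :=
  Measure.map φ (P.withDensity fun ω => ENNReal.ofReal (φ ω))

/-- The convex set `C` of all increasing functions `f : [0,∞) → [0,1]` that are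
right-continuous at every continuity point of `F_φ` and satisfy `∫ f dμ = v`.
(Functions on `[0,∞)` are modelled as functions on `ℝ` pinned by `f(x) = f(0)` for
`x < 0`.) -/
def CSet {Ω : Type*} [MeasurableSpace Ω] (P : Measure Ω) (φ : Ω → ℝ) (v : ℝ) :
    Set (ℝ → ℝ) :=
  {f | MonotoneOn f (Ici 0) ∧ (∀ x ∈ Ici (0:ℝ), f x ∈ Icc (0:ℝ) 1) ∧
    (∀ x < (0:ℝ), f x = f 0) ∧
    (∀ x ∈ Ici (0:ℝ), ContinuousAt (cdf P φ) x → ContinuousWithinAt f (Ici x) x) ∧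
    ∫ x, f x ∂(muD P φ) = v}

/-- The class `𝒥` of increasing step functions `f : [0,∞) → [0,1]` taking at most one
value in `(0,1)`: `f = β·1_{J₀} + 1_{J₁}` with `β ∈ (0,1)` and disjoint intervals
`J₀, J₁`, where `J₀` is empty or satisfies `μ(J₀) > 0`, `J₁` is empty or unbounded to the
right, and if both are nonempty, the right endpoint of `J₀` is the left endpoint of
`J₁`. -/
def JSet {Ω : Type*} [MeasurableSpace Ω] (P : Measure Ω) (φ : Ω → ℝ) : Set (ℝ → ℝ) :=
  {f | MonotoneOn f (Ici 0) ∧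
    ∃ (β : ℝ) (J0 J1 : Set ℝ), β ∈ Ioo (0:ℝ) 1 ∧
      J0 ⊆ Ici 0 ∧ J1 ⊆ Ici 0 ∧ J0.OrdConnected ∧ J1.OrdConnected ∧ Disjoint J0 J1 ∧
      (J0 = ∅ ∨ 0 < muD P φ J0) ∧
      (J1 = ∅ ∨ ¬ BddAbove J1) ∧
      (J0.Nonempty → J1.Nonempty → sSup J0 = sInf J1) ∧
      ∀ x ∈ Ici (0:ℝ),
        f x = β * J0.indicator (fun _ => (1:ℝ)) x + J1.indicator (fun _ => (1:ℝ)) x}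

open scoped ENNReal

/-!
By the layer-cake formula, `f₀ = ∫₀¹ h_u du` where `h_u` is the indicator of the upper level set
of `f₀` at height `u`, and the masses `m(u) = ∫ h_u dμ` average to `v` over `(0,1)`. A layer with
`m(u) = v` already lies in `C ∩ 𝒥`. A layer with `m(u₁) > v` and one with `m(u₂) < v` combine,
with weight `(v - m(u₂)) / (m(u₁) - m(u₂))` on the first, into a function of mass `v` taking at
most one value in `(0,1)`. The excess `(m - v)⁺` and the deficit `(v - m)⁺` have the same total
mass `M`, so pairing the layers through the product measure with density `(m(u₁) - m(u₂)) / M`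
gives every layer total weight one, and these functions average back to `f₀`.
-/

namespace LayerRepresentation

/-- `{u < f}` together with the point where a monotone `f` reaches `u` and exceeds it right
after: the indicator is then right-continuous wherever `f` is, and the set still lies between
`{u < f}` and `{u ≤ f}`. -/
def layerSet (f : ℝ → ℝ) (u : ℝ) : Set ℝ := {x | u ≤ f x ∧ ∀ y, x < y → u < f y}

noncomputable def layer (f : ℝ → ℝ) (u x : ℝ) : ℝ := (layerSet f u).indicator 1 (max x 0)

section Layer

variable {f : ℝ → ℝ} {u x : ℝ}

lemma isUpperSet_layerSet (hf : Monotone f) (u : ℝ) : IsUpperSet (layerSet f u) :=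
  fun _ _ hxy hx => ⟨hx.1.trans (hf hxy), fun y hy => hx.2 y (hxy.trans_lt hy)⟩

lemma antitone_layerSet (f : ℝ → ℝ) : Antitone (layerSet f) :=
  fun _ _ huu' _ hx => ⟨huu'.trans hx.1, fun y hy => huu'.trans_lt (hx.2 y hy)⟩

lemma mem_layerSet_of_lt (hf : Monotone f) (h : u < f x) : x ∈ layerSet f u :=
  ⟨h.le, fun _ hy => h.trans_le (hf hy.le)⟩

lemma notMem_layerSet_of_lt (h : f x < u) : x ∉ layerSet f u := fun hx => h.not_ge hx.1

lemma continuousWithinAt_indicator_layerSet (hf : Monotone f)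
    (hfx : ContinuousWithinAt f (Ici x) x) (u : ℝ) :
    ContinuousWithinAt ((layerSet f u).indicator (1 : ℝ → ℝ)) (Ici x) x := by
  by_cases hx : x ∈ layerSet f u
  · exact continuousWithinAt_const.congr
      (fun y hy => indicator_of_mem (isUpperSet_layerSet hf u hy hx) 1)
      (indicator_of_mem hx 1)
  · have hout : ∀ᶠ y in 𝓝[Ici x] x, y ∉ layerSet f u := by
      simp only [layerSet, mem_ofPred_eq, not_and_or, not_le, not_forall, not_lt] at hx
      rcases hx with hlt | ⟨y, hxy, hy⟩
      · exact (hfx.eventually_lt_const hlt).mono fun z hz => notMem_layerSet_of_lt hz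
      · exact eventually_of_mem (mem_nhdsWithin_of_mem_nhds (Iio_mem_nhds hxy))
          fun z hz hmem => (hmem.2 y hz).not_ge hy
    exact continuousWithinAt_const.congr_of_eventuallyEq
      (hout.mono fun y hy => indicator_of_notMem hy 1) (indicator_of_notMem hx 1)

lemma layer_mem_Icc (f : ℝ → ℝ) (u x : ℝ) : layer f u x ∈ Icc (0 : ℝ) 1 := by
  unfold layer indicator
  split_ifs <;> simp

lemma monotone_indicator_max {R : Set ℝ} (hR : IsUpperSet R) :
    Monotone fun x => R.indicator (1 : ℝ → ℝ) (max x 0) := by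
  intro x y hxy
  by_cases hx : max x 0 ∈ R
  · simp [indicator_of_mem hx, indicator_of_mem (hR (max_le_max_right 0 hxy) hx)]
  · simp only [indicator_of_notMem hx]
    exact indicator_nonneg (fun _ _ => by simp) _

lemma monotone_layer (hf : Monotone f) (u : ℝ) : Monotone (layer f u) :=
  monotone_indicator_max (isUpperSet_layerSet hf u)

lemma antitone_layer_apply (f : ℝ → ℝ) (x : ℝ) : Antitone fun u => layer f u x :=
  fun _ _ h => indicator_le_indicator_of_subset (antitone_layerSet f h) (fun _ => zero_le_one) _

lemma layer_eq_one_of_lt (hf : Monotone f) (hx : 0 ≤ x) (h : u < f x) : layer f u x = 1 := by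
  rw [layer, max_eq_left hx, indicator_of_mem (mem_layerSet_of_lt hf h), Pi.one_apply]

lemma layer_eq_zero_of_lt (hx : 0 ≤ x) (h : f x < u) : layer f u x = 0 := by
  rw [layer, max_eq_left hx, indicator_of_notMem (notMem_layerSet_of_lt h)]

lemma continuousWithinAt_layer (hf : Monotone f) (hx : 0 ≤ x)
    (hfx : ContinuousWithinAt f (Ici x) x) (u : ℝ) :
    ContinuousWithinAt (layer f u) (Ici x) x :=
  (continuousWithinAt_indicator_layerSet hf hfx u).congr
    (fun y hy => by rw [layer, max_eq_left (hx.trans hy)]) (by rw [layer, max_eq_left hx])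

lemma lintegral_layer_apply (hf : Monotone f) (hx : 0 ≤ x) (hfx : f x ∈ Icc (0 : ℝ) 1) :
    ∫⁻ u in Ioo 0 1, ENNReal.ofReal (layer f u x) = ENNReal.ofReal (f x) := by
  have hae : (fun u => ENNReal.ofReal (layer f u x)) =ᵐ[volume.restrict (Ioo 0 1)]
      (Iio (f x)).indicator 1 := by
    refine ae_restrict_of_ae ((Measure.ae_ne volume (f x)).mono fun u hu => ?_)
    rcases hu.lt_or_gt with h | h
    · simp [layer_eq_one_of_lt hf hx h, h]
    · simp [layer_eq_zero_of_lt hx h, h.le]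
  rw [lintegral_congr_ae hae, lintegral_indicator_one measurableSet_Iio,
    Measure.restrict_apply measurableSet_Iio, Iio_inter_Ioo, Real.volume_Ioo,
    min_eq_left hfx.2, sub_zero]

end Layer

instance isProbabilityMeasure_restrict_Ioo_zero_one :
    IsProbabilityMeasure (volume.restrict (Ioo (0 : ℝ) 1)) :=
  ⟨by simp [Real.volume_Ioo]⟩

section LayerMass

variable {μ : Measure ℝ} {f : ℝ → ℝ} {u : ℝ}

noncomputable def layerMass (μ : Measure ℝ) (f : ℝ → ℝ) (u : ℝ) : ℝ := ∫ x, layer f u x ∂μ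

lemma layer_eq_indicator (f : ℝ → ℝ) (u : ℝ) :
    layer f u = {x | max x 0 ∈ layerSet f u}.indicator 1 := rfl

lemma measurableSet_layer (hf : Monotone f) (u : ℝ) :
    MeasurableSet {x | max x 0 ∈ layerSet f u} :=
  (measurable_id.max measurable_const) (isUpperSet_layerSet hf u).ordConnected.measurableSet

lemma layerMass_nonneg (f : ℝ → ℝ) (u : ℝ) : 0 ≤ layerMass μ f u :=
  integral_nonneg fun x => (layer_mem_Icc f u x).1

variable [IsFiniteMeasure μ]

lemma integrable_layer (hf : Monotone f) (u : ℝ) : Integrable (layer f u) μ := by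
  rw [layer_eq_indicator]
  exact (integrable_const 1).indicator (measurableSet_layer hf u)

lemma ofReal_layerMass (hf : Monotone f) (u : ℝ) :
    ENNReal.ofReal (layerMass μ f u) = μ {x | max x 0 ∈ layerSet f u} := by
  rw [layerMass, layer_eq_indicator, integral_indicator_one (measurableSet_layer hf u),
    measureReal_def, ENNReal.ofReal_toReal (measure_ne_top μ _)]

lemma antitone_layerMass (hf : Monotone f) : Antitone (layerMass μ f) :=
  fun _ _ h => integral_mono (integrable_layer hf _) (integrable_layer hf _)
    fun x => antitone_layer_apply f x h

lemma lintegral_ofReal_layerMass (hf : Monotone f) (hf01 : ∀ x, f x ∈ Icc (0 : ℝ) 1)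
    (hmax : ∀ x, f (max x 0) = f x) :
    ∫⁻ u in Ioo 0 1, ENNReal.ofReal (layerMass μ f u) = ∫⁻ x, ENNReal.ofReal (f x) ∂μ := by
  have hf0 : 0 ≤ᵐ[μ] f := ae_of_all _ fun x => (hf01 x).1
  have hlt : ∀ t, {x | t < f x} ⊆ {x | max x 0 ∈ layerSet f t} := fun t x hx =>
    mem_layerSet_of_lt hf (by rw [hmax]; exact hx)
  have hle : ∀ t, {x | max x 0 ∈ layerSet f t} ⊆ {x | t ≤ f x} := fun t x hx => by
    simpa [hmax] using hx.1
  have hzero : ∫⁻ t in Ici 1, μ {x | t < f x} = 0 := by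
    refine (setLIntegral_congr_fun measurableSet_Ici fun t ht => ?_).trans lintegral_zero
    exact measure_mono_null
      (fun x (hx : t < f x) => ((hf01 x).2.not_gt (lt_of_le_of_lt ht hx)).elim) measure_empty
  simp only [ofReal_layerMass hf]
  refine le_antisymm ?_ ?_
  · calc ∫⁻ t in Ioo 0 1, μ {x | max x 0 ∈ layerSet f t}
        ≤ ∫⁻ t in Ioo 0 1, μ {x | t ≤ f x} := lintegral_mono fun t => measure_mono (hle t)
      _ ≤ ∫⁻ t in Ioi 0, μ {x | t ≤ f x} := lintegral_mono_set Ioo_subset_Ioi_self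
      _ = ∫⁻ x, ENNReal.ofReal (f x) ∂μ :=
        (lintegral_eq_lintegral_meas_le μ hf0 hf.measurable.aemeasurable).symm
  · calc ∫⁻ x, ENNReal.ofReal (f x) ∂μ
        = ∫⁻ t in Ioo 0 1 ∪ Ici 1, μ {x | t < f x} := by
          rw [lintegral_eq_lintegral_meas_lt μ hf0 hf.measurable.aemeasurable,
            Ioo_union_Ici_eq_Ioi zero_lt_one]
      _ = ∫⁻ t in Ioo 0 1, μ {x | t < f x} := by
          rw [lintegral_union measurableSet_Ici
            ((Iio_disjoint_Ici le_rfl).mono_left Ioo_subset_Iio_self), hzero, add_zero]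
      _ ≤ ∫⁻ t in Ioo 0 1, μ {x | max x 0 ∈ layerSet f t} :=
          lintegral_mono fun t => measure_mono (hlt t)

end LayerMass

section Coupling

variable {X Y : Type*} [MeasurableSpace X] [MeasurableSpace Y]

lemma lintegral_ofReal_sub_symm {ν : Measure X} [IsProbabilityMeasure ν] {g : X → ℝ} {c : ℝ}
    (hg : Measurable g) (hg0 : ∀ x, 0 ≤ g x) (hc : 0 ≤ c)
    (h : ∫⁻ x, ENNReal.ofReal (g x) ∂ν = ENNReal.ofReal c) :
    ∫⁻ x, ENNReal.ofReal (g x - c) ∂ν = ∫⁻ x, ENNReal.ofReal (c - g x) ∂ν := by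
  have hpt : ∀ x, ENNReal.ofReal (g x) + ENNReal.ofReal (c - g x)
      = ENNReal.ofReal c + ENNReal.ofReal (g x - c) := fun x => by
    rcases le_total (g x) c with h | h
    · rw [ENNReal.ofReal_of_nonpos (sub_nonpos.2 h), add_zero,
        ← ENNReal.ofReal_add (hg0 x) (sub_nonneg.2 h), add_sub_cancel]
    · rw [ENNReal.ofReal_of_nonpos (sub_nonpos.2 h), add_zero,
        ← ENNReal.ofReal_add hc (sub_nonneg.2 h), add_sub_cancel]
  have hint := lintegral_congr (μ := ν) hpt
  rw [lintegral_add_left hg.ennreal_ofReal, lintegral_add_left measurable_const, h,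
    lintegral_const, measure_univ, mul_one] at hint
  exact ((ENNReal.add_right_inj ENNReal.ofReal_ne_top).1 hint).symm

lemma lintegral_prod_coupling {ν₁ : Measure X} {ν₂ : Measure Y} [SFinite ν₁] [SFinite ν₂]
    {α ψ₁ : X → ℝ≥0∞} {β ψ₂ : Y → ℝ≥0∞} (hα : Measurable α) (hβ : Measurable β)
    (hψ₁ : Measurable ψ₁) (hψ₂ : Measurable ψ₂) (hα0 : ∀ x, α x ≠ 0) (hβ0 : ∀ y, β y ≠ 0)
    {M : ℝ≥0∞} (hM : M ≠ ∞) (hαM : ∫⁻ x, α x ∂ν₁ = M) (hβM : ∫⁻ y, β y ∂ν₂ = M) :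
    ∫⁻ p, (ψ₁ p.1 * β p.2 + α p.1 * ψ₂ p.2) / M ∂(ν₁.prod ν₂)
      = ∫⁻ x, ψ₁ x ∂ν₁ + ∫⁻ y, ψ₂ y ∂ν₂ := by
  rcases eq_or_ne M 0 with rfl | hM0
  · have hν₁ : ν₁ = 0 := ae_eq_bot.1 <| eventually_false_iff_eq_bot.1 <|
      ((lintegral_eq_zero_iff hα).1 hαM).mono fun x hx => hα0 x hx
    have hν₂ : ν₂ = 0 := ae_eq_bot.1 <| eventually_false_iff_eq_bot.1 <|
      ((lintegral_eq_zero_iff hβ).1 hβM).mono fun y hy => hβ0 y hy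
    simp [hν₁, hν₂]
  simp_rw [div_eq_mul_inv]
  rw [lintegral_mul_const _ (by fun_prop), lintegral_add_left (by fun_prop),
    lintegral_prod_mul hψ₁.aemeasurable hβ.aemeasurable,
    lintegral_prod_mul hα.aemeasurable hψ₂.aemeasurable, hαM, hβM]
  calc ((∫⁻ x, ψ₁ x ∂ν₁) * M + M * ∫⁻ y, ψ₂ y ∂ν₂) * M⁻¹
      = ((∫⁻ x, ψ₁ x ∂ν₁) + ∫⁻ y, ψ₂ y ∂ν₂) * (M * M⁻¹) := by ring
    _ = ∫⁻ x, ψ₁ x ∂ν₁ + ∫⁻ y, ψ₂ y ∂ν₂ := by rw [ENNReal.mul_inv_cancel hM0 hM, mul_one]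

lemma lintegral_eq_setLIntegral_trichotomy (ν : Measure X) {g : X → ℝ} (hg : Measurable g)
    (c : ℝ) (ψ : X → ℝ≥0∞) :
    ∫⁻ x, ψ x ∂ν = ∫⁻ x in {x | g x = c}, ψ x ∂ν + ∫⁻ x in {x | c < g x}, ψ x ∂ν
      + ∫⁻ x in {x | g x < c}, ψ x ∂ν := by
  have hcover : ({x | g x = c} ∪ {x | c < g x}) ∪ {x | g x < c} = univ :=
    eq_univ_of_forall fun x => by
      rcases lt_trichotomy (g x) c with h | h | h <;> simp [h]
  have hd₁ : Disjoint {x | g x = c} {x | c < g x} :=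
    disjoint_left.2 fun x (h : g x = c) (h' : c < g x) => h'.ne' h
  have hd₂ : Disjoint ({x | g x = c} ∪ {x | c < g x}) {x | g x < c} :=
    disjoint_left.2 fun x h (h' : g x < c) => h.elim (fun (h : g x = c) => h'.ne h)
      fun (h : c < g x) => h'.not_gt h
  rw [← lintegral_union (measurableSet_lt measurable_const hg) hd₁,
    ← lintegral_union (measurableSet_lt hg measurable_const) hd₂,
    hcover, Measure.restrict_univ]

lemma lintegral_prod_excess_deficit {ν : Measure X} [IsProbabilityMeasure ν] {g : X → ℝ} {c : ℝ}
    (hg : Measurable g) (hg0 : ∀ x, 0 ≤ g x) (hc : 0 ≤ c)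
    (hgc : ∫⁻ x, ENNReal.ofReal (g x) ∂ν = ENNReal.ofReal c) {ψ : X → ℝ≥0∞} (hψ : Measurable ψ) :
    ∫⁻ p : {x | c < g x} × {x | g x < c},
        (ψ p.1 * ENNReal.ofReal (c - g p.2) + ENNReal.ofReal (g p.1 - c) * ψ p.2)
          / ∫⁻ x, ENNReal.ofReal (g x - c) ∂ν ∂(ν.comap Subtype.val).prod (ν.comap Subtype.val)
      = ∫⁻ x in {x | c < g x}, ψ x ∂ν + ∫⁻ x in {x | g x < c}, ψ x ∂ν := by
  have hsymm := lintegral_ofReal_sub_symm hg hg0 hc hgc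
  have hA₁ : MeasurableSet {x | c < g x} := measurableSet_lt measurable_const hg
  have hA₂ : MeasurableSet {x | g x < c} := measurableSet_lt hg measurable_const
  have hfin : ∫⁻ x, ENNReal.ofReal (g x - c) ∂ν ≠ ∞ := by
    refine hsymm ▸ ne_top_of_le_ne_top (b := ENNReal.ofReal c) ENNReal.ofReal_ne_top ?_
    calc ∫⁻ x, ENNReal.ofReal (c - g x) ∂ν ≤ ∫⁻ _, ENNReal.ofReal c ∂ν :=
          lintegral_mono fun x => ENNReal.ofReal_le_ofReal (by linarith [hg0 x])
      _ = ENNReal.ofReal c := by simp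
  rw [← lintegral_subtype_comap hA₁, ← lintegral_subtype_comap hA₂]
  exact lintegral_prod_coupling (by fun_prop) (by fun_prop)
    (hψ.comp measurable_subtype_coe) (hψ.comp measurable_subtype_coe)
    (fun x => (ENNReal.ofReal_pos.2 (sub_pos.2 x.2)).ne')
    (fun x => (ENNReal.ofReal_pos.2 (sub_pos.2 x.2)).ne') hfin
    ((lintegral_subtype_comap hA₁ fun x => ENNReal.ofReal (g x - c)).trans <|
      setLIntegral_eq_of_support_subset fun x hx =>
        sub_pos.1 (ENNReal.ofReal_pos.1 (pos_iff_ne_zero.2 hx)))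
    ((lintegral_subtype_comap hA₂ fun x => ENNReal.ofReal (c - g x)).trans <|
      hsymm ▸ setLIntegral_eq_of_support_subset fun x hx =>
        sub_pos.1 (ENNReal.ofReal_pos.1 (pos_iff_ne_zero.2 hx)))

end Coupling

section Density

variable {Ω : Type*} [MeasurableSpace Ω] {P : Measure Ω} {φ : Ω → ℝ}

lemma isFiniteMeasure_muD (hφint : Integrable φ P) : IsFiniteMeasure (muD P φ) :=
  haveI := isFiniteMeasure_withDensity_ofReal hφint.hasFiniteIntegral
  Measure.isFiniteMeasure_map _ _

lemma muD_Iio_zero (hφm : Measurable φ) : muD P φ (Iio 0) = 0 := by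
  rw [muD, Measure.map_apply hφm measurableSet_Iio, withDensity_apply _ (hφm measurableSet_Iio)]
  exact setLIntegral_eq_zero_iff (hφm measurableSet_Iio) hφm.ennreal_ofReal |>.2 <|
    ae_of_all _ fun ω (hω : φ ω < 0) => ENNReal.ofReal_of_nonpos hω.le

lemma continuousAt_cdf_zero [IsFiniteMeasure P] (hφm : Measurable φ)
    (hφpos : ∀ᵐ ω ∂P, 0 < φ ω) : ContinuousAt (cdf P φ) 0 := by
  have hnull : ∀ y ≤ 0, P {ω | φ ω ≤ y} = 0 := fun y hy =>
    measure_mono_null (fun ω (h : φ ω ≤ y) => (h.trans hy).not_gt) (ae_iff.1 hφpos)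
  have hright : Tendsto (fun y => P {ω | φ ω ≤ y}) (𝓝[>] 0) (𝓝 0) := by
    have h := tendsto_measure_biInter_gt (μ := P) (s := fun y => {ω | φ ω ≤ y}) (a := 0)
      (fun y _ => (measurableSet_le hφm measurable_const).nullMeasurableSet)
      (fun _ _ _ hij ω (h : φ ω ≤ _) => h.trans hij) ⟨1, one_pos, measure_ne_top _ _⟩
    rwa [measure_mono_null (fun ω hω => le_of_forall_gt_imp_ge_of_dense fun y hy => by
      simpa using mem_iInter₂.1 hω y hy) (hnull 0 le_rfl)] at h
  have hcdf0 : cdf P φ 0 = 0 := by rw [cdf, hnull 0 le_rfl, ENNReal.toReal_zero]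
  have hleft : Tendsto (cdf P φ) (𝓝[≤] 0) (𝓝 0) :=
    tendsto_const_nhds.congr' <| eventually_nhdsWithin_of_forall fun y (hy : y ≤ 0) => by
      rw [cdf, hnull y hy, ENNReal.toReal_zero]
  have h := hleft.sup ((ENNReal.tendsto_toReal ENNReal.zero_ne_top).comp hright)
  rw [nhdsLE_sup_nhdsGT] at h
  rw [ContinuousAt, hcdf0]
  exact h

end Density

noncomputable def layerMix (f : ℝ → ℝ) (w u₁ u₂ x : ℝ) : ℝ :=
  w * layer f u₁ x + (1 - w) * layer f u₂ x

noncomputable def mixWeight (μ : Measure ℝ) (f : ℝ → ℝ) (v u₁ u₂ : ℝ) : ℝ :=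
  (v - layerMass μ f u₂) / (layerMass μ f u₁ - layerMass μ f u₂)

lemma mixWeight_mem_Ioo {μ : Measure ℝ} {f : ℝ → ℝ} {v u₁ u₂ : ℝ} (h₁ : v < layerMass μ f u₁)
    (h₂ : layerMass μ f u₂ < v) : mixWeight μ f v u₁ u₂ ∈ Ioo (0 : ℝ) 1 :=
  ⟨div_pos (by linarith) (by linarith), (div_lt_one (by linarith)).2 (by linarith)⟩

section Membership

variable {Ω : Type*} [MeasurableSpace Ω] {P : Measure Ω} {φ : Ω → ℝ} {v : ℝ} {f : ℝ → ℝ}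
  {w u u₁ u₂ : ℝ}

lemma apply_max_zero_of_mem_CSet (hf : f ∈ CSet P φ v) (x : ℝ) : f (max x 0) = f x := by
  rcases le_or_gt 0 x with hx | hx
  · rw [max_eq_left hx]
  · rw [max_eq_right hx.le, hf.2.2.1 x hx]

lemma monotone_of_mem_CSet (hf : f ∈ CSet P φ v) : Monotone f := fun x y hxy => by
  rw [← apply_max_zero_of_mem_CSet hf x, ← apply_max_zero_of_mem_CSet hf y]
  exact hf.1 (le_max_right x 0) (le_max_right y 0) (max_le_max_right 0 hxy)

lemma mem_Icc_of_mem_CSet (hf : f ∈ CSet P φ v) (x : ℝ) : f x ∈ Icc (0 : ℝ) 1 := by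
  rw [← apply_max_zero_of_mem_CSet hf x]
  exact hf.2.1 _ (le_max_right x 0)

lemma layerMix_self (f : ℝ → ℝ) (w u : ℝ) : layerMix f w u u = layer f u := by
  ext x
  simp only [layerMix]
  ring

lemma mem_JSet_of_isUpperSet {R₁ R₂ : Set ℝ} (hR₁ : IsUpperSet R₁) (hR₂ : IsUpperSet R₂)
    (h21 : R₂ ⊆ R₁) (hw : w ∈ Ioo (0 : ℝ) 1)
    (hJ₀ : (R₁ \ R₂) ∩ Ici 0 = ∅ ∨ 0 < muD P φ ((R₁ \ R₂) ∩ Ici 0)) :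
    (fun x => w * R₁.indicator 1 (max x 0) + (1 - w) * R₂.indicator 1 (max x 0)) ∈ JSet P φ := by
  have hJ₁ : IsUpperSet (R₂ ∩ Ici 0) := hR₂.inter (isUpperSet_Ici 0)
  have hJ₀₁ : ∀ x ∈ (R₁ \ R₂) ∩ Ici 0, ∀ y ∈ R₂ ∩ Ici 0, x ≤ y :=
    fun x hx y hy => le_of_not_gt fun h => hx.1.2 (hR₂ h.le hy.1)
  refine ⟨(((monotone_indicator_max hR₁).const_mul hw.1.le).add
      ((monotone_indicator_max hR₂).const_mul (sub_nonneg.2 hw.2.le))).monotoneOn _,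
    w, (R₁ \ R₂) ∩ Ici 0, R₂ ∩ Ici 0, hw, inter_subset_right, inter_subset_right,
    (hR₁.ordConnected.inter hR₂.compl.ordConnected).inter ordConnected_Ici, hJ₁.ordConnected,
    disjoint_left.2 fun x hx hx' => hx.1.2 hx'.1, hJ₀,
    (R₂ ∩ Ici 0).eq_empty_or_nonempty.imp_right hJ₁.not_bddAbove, fun hne₀ hne₁ => ?_,
    fun x hx => ?_⟩
  · obtain ⟨x₀, hx₀⟩ := hne₀
    have hbdd : BddAbove ((R₁ \ R₂) ∩ Ici 0) := ⟨hne₁.some, fun x hx => hJ₀₁ x hx _ hne₁.some_mem⟩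
    refine le_antisymm (csSup_le ⟨x₀, hx₀⟩ fun x hx => le_csInf hne₁ (hJ₀₁ x hx)) ?_
    refine le_of_forall_gt_imp_ge_of_dense fun z hz => csInf_le ⟨x₀, hJ₀₁ x₀ hx₀⟩ ?_
    have hx₀z : x₀ ≤ z := (le_csSup hbdd hx₀).trans hz.le
    have hz₀ : z ∈ Ici 0 := le_trans hx₀.2 hx₀z
    by_contra hz₂
    exact hz.not_ge (le_csSup hbdd ⟨⟨hR₁ hx₀z hx₀.1.1, fun h => hz₂ ⟨h, hz₀⟩⟩, hz₀⟩)
  · rw [mem_Ici] at hx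
    simp only [max_eq_left hx]
    by_cases h₂ : x ∈ R₂
    · simp [h₂, h21 h₂, hx]
    · by_cases h₁ : x ∈ R₁ <;> simp [h₁, h₂, hx]

lemma layerMass_diff_pos [IsFiniteMeasure (muD P φ)] (hm : Monotone f)
    (hμ0 : muD P φ (Iio 0) = 0) (h : layerMass (muD P φ) f u₂ < layerMass (muD P φ) f u₁) :
    0 < muD P φ ((layerSet f u₁ \ layerSet f u₂) ∩ Ici 0) := by
  rw [pos_iff_ne_zero]
  intro hJ₀
  have hsub : {x | max x 0 ∈ layerSet f u₁} ⊆
      {x | max x 0 ∈ layerSet f u₂} ∪ (((layerSet f u₁ \ layerSet f u₂) ∩ Ici 0) ∪ Iio 0) := by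
    intro x hx
    by_cases h₂ : max x 0 ∈ layerSet f u₂
    · exact Or.inl h₂
    rcases le_or_gt 0 x with hx0 | hx0
    · have hx₁ : max x 0 ∈ layerSet f u₁ := hx
      rw [max_eq_left hx0] at hx₁ h₂
      exact Or.inr (Or.inl ⟨⟨hx₁, h₂⟩, hx0⟩)
    · exact Or.inr (Or.inr hx0)
  have hle := (measure_mono (μ := muD P φ) hsub).trans (measure_union_le _ _)
  rw [measure_union_null hJ₀ hμ0, add_zero, ← ofReal_layerMass hm, ← ofReal_layerMass hm,
    ENNReal.ofReal_le_ofReal_iff (layerMass_nonneg f u₂)] at hle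
  exact hle.not_gt h

variable [IsFiniteMeasure (muD P φ)]

lemma lintegral_layerMass_of_mem_CSet (hf : f ∈ CSet P φ v) :
    ∫⁻ u in Ioo 0 1, ENNReal.ofReal (layerMass (muD P φ) f u) = ENNReal.ofReal v := by
  have hm := monotone_of_mem_CSet hf
  have hf01 := mem_Icc_of_mem_CSet hf
  rw [lintegral_ofReal_layerMass hm hf01 (apply_max_zero_of_mem_CSet hf), ← hf.2.2.2.2,
    ofReal_integral_eq_lintegral_ofReal (Integrable.of_bound hm.measurable.aestronglyMeasurable 1
      (ae_of_all _ fun x => by simpa [abs_of_nonneg (hf01 x).1] using (hf01 x).2))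
      (ae_of_all _ fun x => (hf01 x).1)]

lemma layerMix_mem_CSet (hf : f ∈ CSet P φ v) (hw : w ∈ Icc (0 : ℝ) 1)
    (hv : w * layerMass (muD P φ) f u₁ + (1 - w) * layerMass (muD P φ) f u₂ = v) :
    layerMix f w u₁ u₂ ∈ CSet P φ v := by
  have hm := monotone_of_mem_CSet hf
  have hw' : 0 ≤ 1 - w := sub_nonneg.2 hw.2
  refine ⟨(((monotone_layer hm u₁).const_mul hw.1).add
      ((monotone_layer hm u₂).const_mul hw')).monotoneOn _, fun x _ => ⟨?_, ?_⟩,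
    fun x hx => by simp [layerMix, layer, max_eq_right hx.le],
    fun x hx hcx => ?_, ?_⟩
  · exact add_nonneg (mul_nonneg hw.1 (layer_mem_Icc f u₁ x).1)
      (mul_nonneg hw' (layer_mem_Icc f u₂ x).1)
  · calc layerMix f w u₁ u₂ x ≤ w * 1 + (1 - w) * 1 := by
          unfold layerMix
          gcongr <;> [exact hw.1; exact (layer_mem_Icc f u₁ x).2; exact (layer_mem_Icc f u₂ x).2]
      _ = 1 := by ring
  · have hfx := hf.2.2.2.1 x hx hcx
    exact (continuousWithinAt_const.mul (continuousWithinAt_layer hm hx hfx u₁)).add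
      (continuousWithinAt_const.mul (continuousWithinAt_layer hm hx hfx u₂))
  · rw [← hv, layerMass, layerMass, ← integral_const_mul, ← integral_const_mul,
      ← integral_add ((integrable_layer hm u₁).const_mul w)
        ((integrable_layer hm u₂).const_mul (1 - w))]
    rfl

lemma layer_mem_CSet_inter_JSet (hf : f ∈ CSet P φ v) (hu : layerMass (muD P φ) f u = v) :
    layer f u ∈ CSet P φ v ∩ JSet P φ := by
  have hm := monotone_of_mem_CSet hf
  rw [← layerMix_self f (1 / 2) u]
  refine ⟨layerMix_mem_CSet hf ⟨by norm_num, by norm_num⟩ (by rw [hu]; ring), ?_⟩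
  exact mem_JSet_of_isUpperSet (isUpperSet_layerSet hm u) (isUpperSet_layerSet hm u) le_rfl
    ⟨by norm_num, by norm_num⟩ (Or.inl (by simp))

lemma layerMix_mem_CSet_inter_JSet (hμ0 : muD P φ (Iio 0) = 0) (hf : f ∈ CSet P φ v)
    (h₁ : v < layerMass (muD P φ) f u₁) (h₂ : layerMass (muD P φ) f u₂ < v) :
    layerMix f (mixWeight (muD P φ) f v u₁ u₂) u₁ u₂ ∈ CSet P φ v ∩ JSet P φ := by
  have hm := monotone_of_mem_CSet hf
  have hlt : layerMass (muD P φ) f u₂ < layerMass (muD P φ) f u₁ := h₂.trans h₁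
  have hw := mixWeight_mem_Ioo h₁ h₂
  refine ⟨layerMix_mem_CSet hf (Ioo_subset_Icc_self hw) ?_, ?_⟩
  · have hne : layerMass (muD P φ) f u₁ - layerMass (muD P φ) f u₂ ≠ 0 := by linarith
    calc _ = layerMass (muD P φ) f u₂ + mixWeight (muD P φ) f v u₁ u₂
          * (layerMass (muD P φ) f u₁ - layerMass (muD P φ) f u₂) := by ring
      _ = v := by rw [mixWeight, div_mul_cancel₀ _ hne]; ring
  · exact mem_JSet_of_isUpperSet (isUpperSet_layerSet hm u₁) (isUpperSet_layerSet hm u₂)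
      (antitone_layerSet f ((antitone_layerMass hm).reflect_lt hlt).le) hw
      (Or.inr (layerMass_diff_pos hm hμ0 hlt))

end Membership

abbrev measurableSpaceEvalPos : MeasurableSpace (ℝ → ℝ) :=
  ⨆ x ∈ Ioi (0 : ℝ), MeasurableSpace.comap (fun g : ℝ → ℝ => g x) inferInstance

section EvalPos

attribute [local instance] measurableSpaceEvalPos

lemma measurable_eval_of_pos {x : ℝ} (hx : 0 < x) : Measurable fun g : ℝ → ℝ => g x :=
  measurable_iff_comap_le.2 <| le_iSup₂ (f := fun x (_ : x ∈ Ioi (0 : ℝ)) =>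
    MeasurableSpace.comap (fun g : ℝ → ℝ => g x) inferInstance) x hx

lemma measurable_of_eval_pos {α : Type*} [MeasurableSpace α] {F : α → ℝ → ℝ}
    (hF : ∀ x, 0 < x → Measurable fun a => F a x) : Measurable F := by
  simp only [measurable_iff_comap_le, MeasurableSpace.comap_iSup, MeasurableSpace.comap_comp]
  exact iSup₂_le fun x hx => measurable_iff_comap_le.1 (hF x hx)

lemma measurable_subtype_eval {S : Set (ℝ → ℝ)} (hS : ∀ g ∈ S, ContinuousWithinAt g (Ici 0) 0)
    {x : ℝ} (hx : 0 ≤ x) : Measurable fun g : S => (g : ℝ → ℝ) x := by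
  rcases hx.eq_or_lt with rfl | hx
  · refine measurable_of_tendsto_metrizable (f := fun (n : ℕ) (g : S) => (g : ℝ → ℝ) (1 / (n + 1)))
      (fun n => (measurable_eval_of_pos (by positivity)).comp measurable_subtype_coe)
      (tendsto_pi_nhds.2 fun g => (hS g g.2).tendsto.comp ?_)
    exact tendsto_nhdsWithin_iff.2 ⟨tendsto_one_div_add_atTop_nhds_zero_nat,
      Eventually.of_forall fun n => mem_Ici.2 (by positivity)⟩
  · exact (measurable_eval_of_pos hx).comp measurable_subtype_coe

end EvalPos

noncomputable def pairDensity (μ : Measure ℝ) (f : ℝ → ℝ) (v u₁ u₂ : ℝ) : ℝ≥0∞ :=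
  ENNReal.ofReal (layerMass μ f u₁ - layerMass μ f u₂)
    / ∫⁻ u in Ioo 0 1, ENNReal.ofReal (layerMass μ f u - v)

lemma pairDensity_mul_mixWeight {μ : Measure ℝ} {f : ℝ → ℝ} {v u₁ u₂ : ℝ}
    (h₁ : v < layerMass μ f u₁) (h₂ : layerMass μ f u₂ < v) (a b : ℝ≥0∞) :
    pairDensity μ f v u₁ u₂ * (ENNReal.ofReal (mixWeight μ f v u₁ u₂) * a
        + ENNReal.ofReal (1 - mixWeight μ f v u₁ u₂) * b)
      = (a * ENNReal.ofReal (v - layerMass μ f u₂) + ENNReal.ofReal (layerMass μ f u₁ - v) * b)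
        / ∫⁻ u in Ioo 0 1, ENNReal.ofReal (layerMass μ f u - v) := by
  have hd : 0 < layerMass μ f u₁ - layerMass μ f u₂ := by linarith
  have hw : (layerMass μ f u₁ - layerMass μ f u₂) * mixWeight μ f v u₁ u₂
      = v - layerMass μ f u₂ := by rw [mixWeight, mul_div_cancel₀ _ hd.ne']
  have h₁ : ENNReal.ofReal (layerMass μ f u₁ - layerMass μ f u₂)
      * ENNReal.ofReal (mixWeight μ f v u₁ u₂) = ENNReal.ofReal (v - layerMass μ f u₂) := by
    rw [← ENNReal.ofReal_mul hd.le, hw]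
  have h₂ : ENNReal.ofReal (layerMass μ f u₁ - layerMass μ f u₂)
      * ENNReal.ofReal (1 - mixWeight μ f v u₁ u₂) = ENNReal.ofReal (layerMass μ f u₁ - v) := by
    rw [← ENNReal.ofReal_mul hd.le, mul_one_sub, hw, sub_sub_sub_cancel_right]
  simp only [pairDensity, div_eq_mul_inv]
  calc _ = (ENNReal.ofReal (layerMass μ f u₁ - layerMass μ f u₂)
        * ENNReal.ofReal (mixWeight μ f v u₁ u₂) * a
        + ENNReal.ofReal (layerMass μ f u₁ - layerMass μ f u₂)
        * ENNReal.ofReal (1 - mixWeight μ f v u₁ u₂) * b)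
        * (∫⁻ u in Ioo 0 1, ENNReal.ofReal (layerMass μ f u - v))⁻¹ := by ring
    _ = _ := by rw [h₁, h₂]; ring

section Representation

attribute [local instance] measurableSpaceEvalPos

variable {Ω : Type*} [MeasurableSpace Ω] {P : Measure Ω} {φ : Ω → ℝ} {v : ℝ} {f : ℝ → ℝ}
  [IsFiniteMeasure (muD P φ)]

noncomputable def balancedLayer (hf : f ∈ CSet P φ v)
    (u : {u | layerMass (muD P φ) f u = v}) : ↥(CSet P φ v ∩ JSet P φ) :=
  ⟨layer f u, layer_mem_CSet_inter_JSet hf u.2⟩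

noncomputable def pairedLayerMix (hμ0 : muD P φ (Iio 0) = 0) (hf : f ∈ CSet P φ v)
    (p : {u | v < layerMass (muD P φ) f u} × {u | layerMass (muD P φ) f u < v}) :
    ↥(CSet P φ v ∩ JSet P φ) :=
  ⟨layerMix f (mixWeight (muD P φ) f v p.1 p.2) p.1 p.2,
    layerMix_mem_CSet_inter_JSet hμ0 hf p.1.2 p.2.2⟩

noncomputable def reprMeasure (hμ0 : muD P φ (Iio 0) = 0) (hf : f ∈ CSet P φ v) :
    Measure ↥(CSet P φ v ∩ JSet P φ) :=
  ((volume.restrict (Ioo 0 1)).comap Subtype.val).map (balancedLayer hf)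
    + ((((volume.restrict (Ioo 0 1)).comap Subtype.val).prod
        ((volume.restrict (Ioo 0 1)).comap Subtype.val)).withDensity
        fun p => pairDensity (muD P φ) f v p.1 p.2).map (pairedLayerMix hμ0 hf)

lemma measurable_balancedLayer (hf : f ∈ CSet P φ v) : Measurable (balancedLayer hf) :=
  (measurable_of_eval_pos fun x _ =>
    (antitone_layer_apply f x).measurable.comp measurable_subtype_coe).subtype_mk

lemma measurable_pairedLayerMix (hμ0 : muD P φ (Iio 0) = 0) (hf : f ∈ CSet P φ v) :
    Measurable (pairedLayerMix hμ0 hf) := by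
  have hm := (antitone_layerMass (μ := muD P φ) (monotone_of_mem_CSet hf)).measurable
  refine (measurable_of_eval_pos fun x _ => ?_).subtype_mk
  have hl := (antitone_layer_apply f x).measurable
  simp only [layerMix, mixWeight]
  fun_prop

lemma lintegral_reprMeasure (hμ0 : muD P φ (Iio 0) = 0) (hf : f ∈ CSet P φ v)
    {F : (ℝ → ℝ) → ℝ≥0∞} (hF : Measurable fun g : ↥(CSet P φ v ∩ JSet P φ) => F g)
    (hFlayer : Measurable fun u => F (layer f u))
    (hFmix : ∀ w ∈ Icc (0 : ℝ) 1, ∀ u₁ u₂, F (layerMix f w u₁ u₂)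
      = ENNReal.ofReal w * F (layer f u₁) + ENNReal.ofReal (1 - w) * F (layer f u₂)) :
    ∫⁻ g, F g ∂reprMeasure hμ0 hf = ∫⁻ u in Ioo 0 1, F (layer f u) := by
  have hmono := monotone_of_mem_CSet hf
  have hm : Measurable (layerMass (muD P φ) f) := (antitone_layerMass hmono).measurable
  rw [reprMeasure, lintegral_add_measure, lintegral_map hF (measurable_balancedLayer hf),
    lintegral_map hF (measurable_pairedLayerMix hμ0 hf),
    lintegral_withDensity_eq_lintegral_mul _ (by unfold pairDensity; fun_prop)
      (g := fun p => F (pairedLayerMix hμ0 hf p)) (hF.comp (measurable_pairedLayerMix hμ0 hf))]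
  set m := layerMass (muD P φ) f
  have hv : 0 ≤ v := hf.2.2.2.2 ▸ integral_nonneg fun x => (mem_Icc_of_mem_CSet hf x).1
  have hcoupling := lintegral_prod_excess_deficit hm (layerMass_nonneg f) hv
    (lintegral_layerMass_of_mem_CSet hf) hFlayer
  set M := ∫⁻ u in Ioo 0 1, ENNReal.ofReal (m u - v)
  have hpair : ∀ p : {u | v < m u} × {u | m u < v},
      pairDensity (muD P φ) f v p.1 p.2 * F (pairedLayerMix hμ0 hf p)
        = (F (layer f p.1) * ENNReal.ofReal (v - m p.2)
          + ENNReal.ofReal (m p.1 - v) * F (layer f p.2)) / M := fun p => by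
    rw [pairedLayerMix, hFmix _ (Ioo_subset_Icc_self (mixWeight_mem_Ioo p.1.2 p.2.2))]
    exact pairDensity_mul_mixWeight p.1.2 p.2.2 _ _
  have hT : ∫⁻ u : {u | m u = v}, F (balancedLayer hf u)
      ∂(volume.restrict (Ioo 0 1)).comap Subtype.val
      = ∫⁻ u in {u | m u = v}, F (layer f u) ∂volume.restrict (Ioo 0 1) :=
    lintegral_subtype_comap (measurableSet_eq_fun hm measurable_const) fun u => F (layer f u)
  rw [hT, lintegral_eq_setLIntegral_trichotomy (volume.restrict (Ioo 0 1)) hm v, add_assoc,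
    ← hcoupling]
  exact congrArg _ (lintegral_congr hpair)

lemma isProbabilityMeasure_reprMeasure (hμ0 : muD P φ (Iio 0) = 0) (hf : f ∈ CSet P φ v) :
    IsProbabilityMeasure (reprMeasure hμ0 hf) := by
  constructor
  simpa using lintegral_reprMeasure hμ0 hf (F := 1) measurable_const measurable_const
    fun w hw _ _ => by
      simp only [Pi.one_apply, mul_one]
      rw [← ENNReal.ofReal_add hw.1 (sub_nonneg.2 hw.2), add_sub_cancel, ENNReal.ofReal_one]

lemma integral_reprMeasure_eval (hμ0 : muD P φ (Iio 0) = 0) (hf : f ∈ CSet P φ v)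
    (hcdf : ContinuousAt (cdf P φ) 0) {x : ℝ} (hx : 0 ≤ x) :
    ∫ g, (g : ℝ → ℝ) x ∂reprMeasure hμ0 hf = f x := by
  have heval := measurable_subtype_eval
    (fun g (hg : g ∈ CSet P φ v ∩ JSet P φ) => hg.1.2.2.2.1 0 self_mem_Ici hcdf) hx
  have h := lintegral_reprMeasure hμ0 hf (F := fun g => ENNReal.ofReal (g x))
    heval.ennreal_ofReal (antitone_layer_apply f x).measurable.ennreal_ofReal
    fun w hw u₁ u₂ => by
      rw [layerMix, ENNReal.ofReal_add (mul_nonneg hw.1 (layer_mem_Icc f u₁ x).1)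
          (mul_nonneg (sub_nonneg.2 hw.2) (layer_mem_Icc f u₂ x).1),
        ENNReal.ofReal_mul hw.1, ENNReal.ofReal_mul (sub_nonneg.2 hw.2)]
  rw [lintegral_layer_apply (monotone_of_mem_CSet hf) hx (mem_Icc_of_mem_CSet hf x)] at h
  rw [integral_eq_lintegral_of_nonneg_ae (ae_of_all _ fun g => (g.2.1.2.1 x hx).1)
    heval.aestronglyMeasurable, h, ENNReal.toReal_ofReal (mem_Icc_of_mem_CSet hf x).1]

end Representation

end LayerRepresentation

open LayerRepresentation in
theorem integral_representation_of_C_general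
    {Ω : Type*} [MeasurableSpace Ω] (P : Measure Ω) [IsProbabilityMeasure P]
    (φ : Ω → ℝ) (hφm : Measurable φ) (hφint : Integrable φ P)
    (hφpos : ∀ᵐ ω ∂P, 0 < φ ω)
    (v : ℝ)
    (f₀ : ℝ → ℝ) (hf₀ : f₀ ∈ CSet P φ v) :
    letI : MeasurableSpace (ℝ → ℝ) :=
      ⨆ x ∈ Ioi (0:ℝ), MeasurableSpace.comap (fun f : ℝ → ℝ => f x) inferInstance
    ∃ η : Measure ↥(CSet P φ v ∩ JSet P φ), IsProbabilityMeasure η ∧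
      ∀ x : ℝ, 0 ≤ x → f₀ x = ∫ g, (g : ℝ → ℝ) x ∂η := by
  have := isFiniteMeasure_muD hφint
  have hμ0 := muD_Iio_zero (P := P) hφm
  exact ⟨reprMeasure hμ0 hf₀, isProbabilityMeasure_reprMeasure hμ0 hf₀, fun x hx =>
    (integral_reprMeasure_eval hμ0 hf₀ (continuousAt_cdf_zero hφm hφpos) hx).symm⟩

/-- Lemma 5.2: every `f₀ ∈ C` is a mixture of elements of `C ∩ 𝒥`:
there exists a probability measure `η` on `C ∩ 𝒥` (with the σ-algebra generated by the
evaluation maps `f ↦ f(x)`, `x ∈ (0,∞)`) such that `f₀(x) = ∫ f(x) η(df)` for all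
`x ≥ 0`. -/
theorem integral_representation_of_C
    {Ω : Type*} [MeasurableSpace Ω] (P : Measure Ω) [IsProbabilityMeasure P]
    (hP : Atomless P)
    (φ : Ω → ℝ) (hφm : Measurable φ) (hφint : Integrable φ P)
    (hφpos : ∀ᵐ ω ∂P, 0 < φ ω) (hφ1 : ∫ ω, φ ω ∂P = 1)
    (v : ℝ) (hv : v ∈ Icc (0:ℝ) 1)
    (f₀ : ℝ → ℝ) (hf₀ : f₀ ∈ CSet P φ v) :
    letI : MeasurableSpace (ℝ → ℝ) :=
      ⨆ x ∈ Ioi (0:ℝ), MeasurableSpace.comap (fun f : ℝ → ℝ => f x) inferInstance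
    ∃ η : Measure ↥(CSet P φ v ∩ JSet P φ), IsProbabilityMeasure η ∧
      ∀ x : ℝ, 0 ≤ x → f₀ x = ∫ g, (g : ℝ → ℝ) x ∂η :=
  integral_representation_of_C_general P φ hφm hφint hφpos v f₀ hf₀
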